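/- The asymptotic PCA amplitude bias at the largest real root β of B satisfies the bound 1 + (β/(cθ²) − 1)·(β/θ² + 1) ≥ (1 + σ̄²/(cθ²))·(1 + σ̄²/θ²), with equality if and only if σ_1² = ⋯ = σ_L². (Homoscedastic noise minimizes the asymptotic positive bias of the PCA amplitudes for a fixed average noise variance.) -/

import Mathlib

/-!
The bias `1 + (x/(cθ²) − 1)(x/θ² + 1)` is a quadratic in `x` that increases beyond its vertex
`(c − 1)θ²/2`, and the claimed lower bound is exactly its value at `x = σ̄² + cθ²`, the root of `B`
for homoscedastic noise. So it suffices to show `σ̄² + cθ² ≤ β`, with equality iff the noise is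
homoscedastic. With `yₗ = β − σₗ²`, the root equation says that the weighted harmonic mean of the
`yₗ` is `cθ²`, while their weighted arithmetic mean is `β − σ̄²`; the arithmetic–harmonic mean
inequality (Jensen for the strictly convex `x ↦ x⁻¹`) gives both claims.
-/

open Finset

theorem strictConvexOn_inv_Ioi : StrictConvexOn ℝ (Set.Ioi 0) fun x : ℝ => x⁻¹ := by
  simpa only [zpow_neg_one] using strictConvexOn_zpow (m := -1) (by norm_num) (by norm_num)

section HarmonicMean

variable {ι : Type*} [Fintype ι] {w y : ι → ℝ}

theorem inv_sum_mul_le_sum_div (hw : ∀ i, 0 ≤ w i) (hw1 : ∑ i, w i = 1) (hy : ∀ i, 0 < y i) :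
    (∑ i, w i * y i)⁻¹ ≤ ∑ i, w i / y i := by
  simpa only [smul_eq_mul, div_eq_mul_inv] using
    strictConvexOn_inv_Ioi.convexOn.map_sum_le (fun i _ => hw i) hw1 fun i _ => hy i

theorem inv_sum_mul_eq_sum_div_iff (hw : ∀ i, 0 < w i) (hw1 : ∑ i, w i = 1)
    (hy : ∀ i, 0 < y i) :
    (∑ i, w i * y i)⁻¹ = ∑ i, w i / y i ↔ ∀ i j, y i = y j := by
  simpa only [smul_eq_mul, div_eq_mul_inv, mem_univ, true_implies] using
    strictConvexOn_inv_Ioi.map_sum_eq_iff_of_pos (fun i _ => hw i) hw1 fun i _ => hy i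

end HarmonicMean

section SecularEquation

variable {ι : Type*} [Fintype ι] {w σ : ι → ℝ} {a β : ℝ}

theorem sum_mul_sub_eq_sub_sum_mul (hw1 : ∑ i, w i = 1) :
    ∑ i, w i * (β - σ i) = β - ∑ i, w i * σ i := by
  simp only [mul_sub, sum_sub_distrib, ← sum_mul, hw1, one_mul]

theorem sum_mul_add_le_of_sum_div_sub_eq_inv (ha : 0 < a) (hw : ∀ i, 0 ≤ w i)
    (hw1 : ∑ i, w i = 1) (hσβ : ∀ i, σ i < β) (hβ : ∑ i, w i / (β - σ i) = a⁻¹) :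
    ∑ i, w i * σ i + a ≤ β := by
  have hy : ∀ i, 0 < β - σ i := fun i => sub_pos.2 (hσβ i)
  have hmean : 0 < β - ∑ i, w i * σ i := by
    simpa only [sum_mul_sub_eq_sub_sum_mul hw1, smul_eq_mul, Set.mem_Ioi] using
      (convex_Ioi (0 : ℝ)).sum_mem (z := fun i => β - σ i) (fun i _ => hw i) hw1 fun i _ => hy i
  have hinv := inv_sum_mul_le_sum_div hw hw1 hy
  rw [sum_mul_sub_eq_sub_sum_mul hw1, hβ, inv_le_inv₀ hmean ha] at hinv
  linarith

theorem eq_sum_mul_add_iff_of_sum_div_sub_eq_inv (hw : ∀ i, 0 < w i)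
    (hw1 : ∑ i, w i = 1) (hσβ : ∀ i, σ i < β) (hβ : ∑ i, w i / (β - σ i) = a⁻¹) :
    β = ∑ i, w i * σ i + a ↔ ∀ i j, σ i = σ j := by
  have hy : ∀ i, 0 < β - σ i := fun i => sub_pos.2 (hσβ i)
  calc β = ∑ i, w i * σ i + a ↔ (∑ i, w i * (β - σ i))⁻¹ = a⁻¹ := by
        rw [sum_mul_sub_eq_sub_sum_mul hw1, inv_inj, sub_eq_iff_eq_add']
    _ ↔ ∀ i j, β - σ i = β - σ j := by rw [← hβ, inv_sum_mul_eq_sum_div_iff hw hw1 hy]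
    _ ↔ ∀ i j, σ i = σ j := by simp only [sub_right_inj]

end SecularEquation

section AmplitudeBias

variable {c θ : ℝ}

noncomputable def amplitudeBias (c θ x : ℝ) : ℝ :=
  1 + (x / (c * θ ^ 2) - 1) * (x / θ ^ 2 + 1)

theorem amplitudeBias_add_mul_sq (hc : c ≠ 0) (hθ : θ ≠ 0) (s : ℝ) :
    amplitudeBias c θ (s + c * θ ^ 2) = (1 + s / (c * θ ^ 2)) * (1 + s / θ ^ 2) := by
  unfold amplitudeBias
  field_simp
  ring

theorem amplitudeBias_strictMonoOn (hc : 0 < c) (hθ : θ ≠ 0) :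
    StrictMonoOn (amplitudeBias c θ) (Set.Ici ((c - 1) * θ ^ 2 / 2)) := by
  intro x hx y hy hxy
  have hdiff : amplitudeBias c θ y - amplitudeBias c θ x =
      (y - x) * (x + y - (c - 1) * θ ^ 2) / (c * θ ^ 2 * θ ^ 2) := by
    unfold amplitudeBias
    field_simp
    ring
  have hpos : 0 < (y - x) * (x + y - (c - 1) * θ ^ 2) / (c * θ ^ 2 * θ ^ 2) := by
    have : (c - 1) * θ ^ 2 < x + y := by rw [Set.mem_Ici] at hx hy; linarith
    exact div_pos (mul_pos (sub_pos.2 hxy) (sub_pos.2 this)) (by positivity)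
  linarith

end AmplitudeBias

theorem amplitude_bias_bound_general
    (c θ : ℝ) (hc : 0 < c) (hθ : 0 < θ)
    (L : ℕ) (p σ : Fin L → ℝ)
    (hp : ∀ ℓ, 0 < p ℓ) (hpsum : ∑ ℓ, p ℓ = 1)
    (hσ : ∀ ℓ, 0 < σ ℓ)
    (σmax : ℝ) (hmaxle : ∀ ℓ, σ ℓ ≤ σmax)
    (B : ℝ → ℝ) (hB : ∀ x, B x = 1 - c * θ ^ 2 * ∑ ℓ, p ℓ / (x - σ ℓ))
    (β : ℝ) (hβmem : σmax < β) (hβroot : B β = 0) :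
    (1 + (∑ ℓ, p ℓ * σ ℓ) / (c * θ ^ 2)) * (1 + (∑ ℓ, p ℓ * σ ℓ) / θ ^ 2) ≤
      1 + (β / (c * θ ^ 2) - 1) * (β / θ ^ 2 + 1) ∧
    (1 + (β / (c * θ ^ 2) - 1) * (β / θ ^ 2 + 1) =
      (1 + (∑ ℓ, p ℓ * σ ℓ) / (c * θ ^ 2)) * (1 + (∑ ℓ, p ℓ * σ ℓ) / θ ^ 2) ↔ (∀ ℓ ℓ' : Fin L, σ ℓ = σ ℓ')) := by
  set s := ∑ ℓ, p ℓ * σ ℓ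
  have hroot : ∑ ℓ, p ℓ / (β - σ ℓ) = (c * θ ^ 2)⁻¹ :=
    eq_inv_of_mul_eq_one_right (sub_eq_zero.1 (hB β ▸ hβroot)).symm
  have hσβ : ∀ ℓ, σ ℓ < β := fun ℓ => (hmaxle ℓ).trans_lt hβmem
  have hs : 0 ≤ s := sum_nonneg fun ℓ _ => (mul_pos (hp ℓ) (hσ ℓ)).le
  have hle : s + c * θ ^ 2 ≤ β :=
    sum_mul_add_le_of_sum_div_sub_eq_inv (by positivity) (fun ℓ => (hp ℓ).le) hpsum hσβ hroot
  have hmono := amplitudeBias_strictMonoOn hc hθ.ne'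
  have hs_mem : s + c * θ ^ 2 ∈ Set.Ici ((c - 1) * θ ^ 2 / 2) := by
    have hθsq : 0 < θ ^ 2 := by positivity
    rw [Set.mem_Ici]; linarith [mul_nonneg hc.le hθsq.le]
  have hβ_mem : β ∈ Set.Ici ((c - 1) * θ ^ 2 / 2) := Set.mem_Ici.2 (le_trans hs_mem hle)
  rw [← amplitudeBias_add_mul_sq hc.ne' hθ.ne']
  exact ⟨hmono.monotoneOn hs_mem hβ_mem hle, (hmono.injOn.eq_iff hβ_mem hs_mem).trans
    (eq_sum_mul_add_iff_of_sum_div_sub_eq_inv hp hpsum hσβ hroot)⟩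

/-- the asymptotic PCA amplitude bias at `β` satisfies
`1 + (β/(cθ²) − 1)(β/θ² + 1) ≥ (1 + σ̄²/(cθ²))(1 + σ̄²/θ²)`, with equality iff the noise
is homoscedastic. -/
theorem amplitude_bias_bound
    (c θ : ℝ) (hc : 0 < c) (hθ : 0 < θ)
    (L : ℕ) (hL : 1 ≤ L) (p σ : Fin L → ℝ)
    (hp : ∀ ℓ, 0 < p ℓ) (hpsum : ∑ ℓ, p ℓ = 1)
    (hσ : ∀ ℓ, 0 < σ ℓ)
    (σmax : ℝ) (hmaxle : ∀ ℓ, σ ℓ ≤ σmax) (hmaxmem : ∃ ℓ, σ ℓ = σmax)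
    (B : ℝ → ℝ) (hB : ∀ x, B x = 1 - c * θ ^ 2 * ∑ ℓ, p ℓ / (x - σ ℓ))
    (β : ℝ) (hβmem : σmax < β) (hβroot : B β = 0) :
    (1 + (∑ ℓ, p ℓ * σ ℓ) / (c * θ ^ 2)) * (1 + (∑ ℓ, p ℓ * σ ℓ) / θ ^ 2) ≤
      1 + (β / (c * θ ^ 2) - 1) * (β / θ ^ 2 + 1) ∧
    (1 + (β / (c * θ ^ 2) - 1) * (β / θ ^ 2 + 1) =
      (1 + (∑ ℓ, p ℓ * σ ℓ) / (c * θ ^ 2)) * (1 + (∑ ℓ, p ℓ * σ ℓ) / θ ^ 2) ↔ (∀ ℓ ℓ' : Fin L, σ ℓ = σ ℓ')) :=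
  amplitude_bias_bound_general c θ hc hθ L p σ hp hpsum hσ σmax hmaxle B hB β hβmem hβroot
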